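/- arXiv:1211.6318 — 2 statements merged into one kernel-verified Lean document; each statement's English description precedes it below -/
import Mathlib

section
/- Let Λ ⊆ ℂ be a cyclotomic Delone set and let U ⊆ S¹ be a set of two or more pairwise nonparallel Λ-directions. If there exists a U-polygon in Λ, then the convex subsets of Λ are NOT determined by the X-rays in the directions of U; i.e., there exist two distinct convex subsets of Λ having the same X-rays in all directions of U. -/
open Complex Set

noncomputable section

/-- `zeta n = e^{2πi/n}`, a primitive `n`-th root of unity in `ℂ`. -/
def zeta (n : ℕ) : ℂ := Complex.exp (2 * Real.pi * Complex.I / n)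

/-- The `n`-th cyclotomic field `ℚ(ζ_n)`, realised as the smallest subfield of `ℂ`
containing `zeta n` (as a subfield of `ℂ` it automatically contains `ℚ`). -/
def cycField (n : ℕ) : Subfield ℂ := Subfield.closure {zeta n}

/-- The difference set `Λ - Λ = {v - w | v, w ∈ Λ}`. -/
def diffSet (Λ : Set ℂ) : Set ℂ := {z | ∃ v ∈ Λ, ∃ w ∈ Λ, z = v - w}

/-- `K_Λ`: the smallest subfield of `ℂ` containing `Λ - Λ` together with the complex
conjugates of all its elements (it automatically contains `ℚ`). -/
def KField (Λ : Set ℂ) : Subfield ℂ :=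
  Subfield.closure (diffSet Λ ∪ (starRingEnd ℂ) '' diffSet Λ)

/-- A Delone set: uniformly discrete and relatively dense. -/
def IsDelone (Λ : Set ℂ) : Prop :=
  (∃ r : ℝ, 0 < r ∧ ∀ x ∈ Λ, ∀ y ∈ Λ, x ≠ y → r ≤ dist x y) ∧
  (∃ R : ℝ, 0 < R ∧ ∀ z : ℂ, ∃ x ∈ Λ, dist z x ≤ R)

/-- `Λ` is an `n`-cyclotomic Delone set: it is a Delone set, `K_Λ ⊆ ℚ(ζ_n)` (n-Cyc), and
every finite subset of `K_Λ` can be mapped into `Λ` by a homothety `z ↦ l·z + t`,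
`l ∈ ℝ`, `l > 0`, `t ∈ ℂ` (Hom). -/
def IsCycDelone (n : ℕ) (Λ : Set ℂ) : Prop :=
  IsDelone Λ ∧
  (KField Λ : Set ℂ) ⊆ (cycField n : Set ℂ) ∧
  ∀ F : Finset ℂ, (F : Set ℂ) ⊆ (KField Λ : Set ℂ) →
    ∃ (l : ℝ) (t : ℂ), 0 < l ∧ ∀ z ∈ F, (l : ℂ) * z + t ∈ Λ

/-- `v` is parallel to `u`, i.e. a real multiple of `u`. -/
def Par (u v : ℂ) : Prop := ∃ r : ℝ, v = (r : ℂ) * u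

/-- `u` is a `Λ`-direction: a unit vector parallel to a nonzero element of `Λ - Λ`. -/
def IsDir (Λ : Set ℂ) (u : ℂ) : Prop :=
  ‖u‖ = 1 ∧ ∃ z ∈ diffSet Λ, z ≠ 0 ∧ Par u z

/-- The directions in `U` are pairwise nonparallel. -/
def PwNonPar (U : Set ℂ) : Prop := ∀ u ∈ U, ∀ v ∈ U, u ≠ v → ¬ Par u v

/-- The line through `z` in direction `u`. -/
def lineDir (u z : ℂ) : Set ℂ := {w | ∃ t : ℝ, w = z + (t : ℂ) * u}

/-- `F₁` and `F₂` have the same X-ray in direction `u`: every line in direction `u`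
contains the same number of points of `F₁` as of `F₂`. -/
def SameXRay (F₁ F₂ : Set ℂ) (u : ℂ) : Prop :=
  ∀ z : ℂ, Nat.card ↥(F₁ ∩ lineDir u z) = Nat.card ↥(F₂ ∩ lineDir u z)

/-- A convex subset of `Λ`: a bounded `C ⊆ Λ` with `C = conv(C) ∩ Λ`. -/
def IsConvexSubset (Λ C : Set ℂ) : Prop :=
  C ⊆ Λ ∧ Bornology.IsBounded C ∧ C = convexHull ℝ C ∩ Λ

/-- The convex subsets of `Λ` are determined by the X-rays in the directions of `U`:
distinct convex subsets never have the same X-rays in all directions of `U`. -/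
def Determined (Λ : Set ℂ) (U : Set ℂ) : Prop :=
  ∀ C₁ C₂ : Set ℂ, IsConvexSubset Λ C₁ → IsConvexSubset Λ C₂ →
    (∀ u ∈ U, SameXRay C₁ C₂ u) → C₁ = C₂

/-- A `U`-polygon, described by its vertex set `V`: a nondegenerate convex polygon
(the vertices are not collinear and each element of `V` is a genuine vertex, i.e. not in
the convex hull of the others) such that for every vertex `v` and every `u ∈ U`, the line
through `v` in direction `u` passes through another vertex `v'`. -/
def IsUPolygon (U : Set ℂ) (V : Finset ℂ) : Prop :=
  3 ≤ V.card ∧ ¬ Collinear ℝ (V : Set ℂ) ∧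
  (∀ v ∈ V, v ∉ convexHull ℝ ((V.erase v : Finset ℂ) : Set ℂ)) ∧
  ∀ v ∈ V, ∀ u ∈ U, ∃ v' ∈ V, v' ≠ v ∧ v' ∈ lineDir u v

/-- A `U`-polygon in `Λ`: a `U`-polygon all of whose vertices lie in `Λ`. -/
def IsUPolygonIn (U Λ : Set ℂ) (V : Finset ℂ) : Prop :=
  IsUPolygon U V ∧ (V : Set ℂ) ⊆ Λ

/-- The determinant of the two plane vectors `z`, `w`. -/
def det2 (z w : ℂ) : ℝ := z.re * w.im - z.im * w.re

/-- The cross ratio `⟨sl z₁, sl z₂, sl z₃, sl z₄⟩ = (t₃-t₁)(t₄-t₂)/((t₃-t₂)(t₄-t₁))` of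
the slopes `tᵢ = sl zᵢ = Im zᵢ / Re zᵢ ∈ ℝ ∪ {∞}` of four pairwise nonparallel nonzero
vectors, computed in homogeneous coordinates; this incorporates the usual conventions
when one of the slopes equals `∞`. -/
def crossRatioSl (z₁ z₂ z₃ z₄ : ℂ) : ℝ :=
  (det2 z₁ z₃ * det2 z₂ z₄) / (det2 z₂ z₃ * det2 z₁ z₄)

/-- The angle in `[0, π)` that the line spanned by a direction `u` makes with the
positive real axis. -/
def dirAngle (u : ℂ) : ℝ :=
  if Complex.arg u < 0 then Complex.arg u + Real.pi
  else if Complex.arg u = Real.pi then 0 else Complex.arg u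

/-- `x ∈ ℝ` can be written in the form
`(1-ζ_N^{k₁})(1-ζ_N^{k₂})/((1-ζ_N^{k₃})(1-ζ_N^{k₄}))` where `N = lcm(2n,12)` and
`(k₁,k₂,k₃,k₄) ∈ ℕ⁴` (positive) with `k₃ < k₁ ≤ k₂ < k₄ ≤ N-1` and `k₁+k₂ = k₃+k₄`. -/
def CrossRatioForm (n : ℕ) (x : ℝ) : Prop :=
  ∃ k₁ k₂ k₃ k₄ : ℕ, 1 ≤ k₃ ∧ k₃ < k₁ ∧ k₁ ≤ k₂ ∧ k₂ < k₄ ∧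
    k₄ ≤ Nat.lcm (2 * n) 12 - 1 ∧ k₁ + k₂ = k₃ + k₄ ∧
    (x : ℂ) = (1 - zeta (Nat.lcm (2 * n) 12) ^ k₁) * (1 - zeta (Nat.lcm (2 * n) 12) ^ k₂) /
      ((1 - zeta (Nat.lcm (2 * n) 12) ^ k₃) * (1 - zeta (Nat.lcm (2 * n) 12) ^ k₄))

open Real

lemma det2_mul_left (r : ℝ) (z w : ℂ) : det2 ((r:ℂ)*z) w = r * det2 z w := by
  simp [det2, Complex.mul_re, Complex.mul_im]; ring
lemma det2_mul_right (r : ℝ) (z w : ℂ) : det2 z ((r:ℂ)*w) = r * det2 z w := by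
  simp [det2, Complex.mul_re, Complex.mul_im]; ring
lemma det2_self (z : ℂ) : det2 z z = 0 := by simp [det2]; ring
lemma det2_sub_right (u z w : ℂ) : det2 u (z - w) = det2 u z - det2 u w := by
  simp [det2]; ring
lemma det2_zero_right (z : ℂ) : det2 z 0 = 0 := by simp [det2]

lemma sum_sq_pos_of_ne_zero {u : ℂ} (hu : u ≠ 0) : 0 < u.re^2 + u.im^2 := by
  have : u.re ≠ 0 ∨ u.im ≠ 0 := by
    by_contra hc
    push_neg at hc
    exact hu (Complex.ext hc.1 hc.2)
  rcases this with h | h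
  · nlinarith [sq_nonneg u.im, sq_pos_of_ne_zero h]
  · nlinarith [sq_nonneg u.re, sq_pos_of_ne_zero h]

lemma det2_eq_zero_iff {u : ℂ} (hu : u ≠ 0) (z : ℂ) : det2 u z = 0 ↔ Par u z := by
  constructor
  · intro h
    have hd := sum_sq_pos_of_ne_zero hu
    simp only [det2] at h
    refine ⟨(u.re * z.re + u.im * z.im)/(u.re^2 + u.im^2), ?_⟩
    apply Complex.ext <;>
      simp only [Complex.mul_re, Complex.mul_im, Complex.ofReal_re, Complex.ofReal_im] <;>
      field_simp <;>
      first
        | linear_combination (-u.im) * h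
        | linear_combination u.re * h
  · rintro ⟨r, rfl⟩
    simp [det2, Complex.mul_re, Complex.mul_im]; ring

lemma mem_lineDir {u : ℂ} (hu : u ≠ 0) (z w : ℂ) :
    w ∈ lineDir u z ↔ det2 u w = det2 u z := by
  constructor
  · rintro ⟨t, rfl⟩
    simp [det2, Complex.add_re, Complex.add_im, Complex.mul_re, Complex.mul_im]; ring
  · intro h
    have : det2 u (w - z) = 0 := by rw [det2_sub_right, h, sub_self]
    obtain ⟨r, hr⟩ := (det2_eq_zero_iff hu _).1 this
    exact ⟨r, by linear_combination (hr : w - z = _)⟩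

lemma det2_sin (z w : ℂ) :
    det2 z w = ‖z‖ * ‖w‖ * Real.sin (w.arg - z.arg) := by
  rw [det2, ← Complex.norm_mul_cos_arg z, ← Complex.norm_mul_sin_arg z,
    ← Complex.norm_mul_cos_arg w, ← Complex.norm_mul_sin_arg w, Real.sin_sub]
  ring


lemma sin_pos_iff' {x : ℝ} (h1 : -(2*π) < x) (h2 : x < 2*π) (h0 : Real.sin x ≠ 0) :
    0 < Real.sin x ↔ (0 < x ∧ x < π) ∨ x < -π := by
  constructor
  · intro h
    by_contra hc
    push_neg at hc
    obtain ⟨hc1, hc2⟩ := hc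
    rcases le_or_gt x 0 with hx | hx
    · have : Real.sin x ≤ 0 := Real.sin_nonpos_of_nonpos_of_neg_pi_le hx hc2
      linarith
    · have hxpi : π ≤ x := hc1 hx
      have : Real.sin (x - π) ≥ 0 :=
        Real.sin_nonneg_of_nonneg_of_le_pi (by linarith) (by linarith)
      rw [Real.sin_sub_pi] at this
      linarith
  · rintro (⟨ha, hb⟩ | h)
    · exact Real.sin_pos_of_pos_of_lt_pi ha hb
    · have heq : Real.sin (x + 2*π) = Real.sin x := Real.sin_add_two_pi x
      rw [← heq]
      exact Real.sin_pos_of_pos_of_lt_pi (by linarith) (by linarith [Real.pi_pos])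

lemma sin_neg_iff' {x : ℝ} (h1 : -(2*π) < x) (h2 : x < 2*π) (h0 : Real.sin x ≠ 0) :
    Real.sin x < 0 ↔ (-π < x ∧ x < 0) ∨ π < x := by
  constructor
  · intro h
    by_contra hc
    push_neg at hc
    obtain ⟨hc1, hc2⟩ := hc
    rcases le_or_gt x (-π) with hx | hx
    · have : Real.sin (x + 2*π) ≥ 0 :=
        Real.sin_nonneg_of_nonneg_of_le_pi (by linarith) (by linarith)
      rw [Real.sin_add_two_pi] at this
      linarith
    · have hx0 : 0 ≤ x := hc1 hx
      have : Real.sin x ≥ 0 := Real.sin_nonneg_of_nonneg_of_le_pi hx0 hc2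
      linarith
  · rintro (⟨ha, hb⟩ | h)
    · have : 0 < Real.sin (-x) := Real.sin_pos_of_pos_of_lt_pi (by linarith) (by linarith)
      rw [Real.sin_neg] at this; linarith
    · have : 0 < Real.sin (x - π) := Real.sin_pos_of_pos_of_lt_pi (by linarith) (by linarith)
      rw [Real.sin_sub_pi] at this; linarith


lemma cone_interval {ta tb tw : ℝ}
    (hta1 : -π < ta) (hta2 : ta ≤ π) (htb1 : -π < tb) (htb2 : tb ≤ π)
    (htw1 : -π < tw) (htw2 : tw ≤ π) (hab : ta < tb)
    (s1 : Real.sin (tb - ta) ≠ 0) (s2 : Real.sin (tw - ta) ≠ 0)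
    (s3 : Real.sin (tb - tw) ≠ 0) :
    ((0 < Real.sin (tw - ta) * Real.sin (tb - ta) ∧
      0 < Real.sin (tb - tw) * Real.sin (tb - ta)) ↔
     (if tb - ta < π then (ta < tw ∧ tw < tb) else ¬(ta < tw ∧ tw < tb))) := by
  have hpi := Real.pi_pos
  have hwa1 : -(2*π) < tw - ta := by linarith
  have hwa2 : tw - ta < 2*π := by linarith
  have hbw1 : -(2*π) < tb - tw := by linarith
  have hbw2 : tb - tw < 2*π := by linarith
  have hba1 : -(2*π) < tb - ta := by linarith
  have hba2 : tb - ta < 2*π := by linarith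
  have hwna : tw ≠ ta := by
    intro h; rw [h] at s2; simp at s2
  have hwnb : tw ≠ tb := by
    intro h; rw [h] at s3; simp at s3
  rcases lt_or_ge (tb - ta) π with hcase | hcase
  · rw [if_pos hcase]
    have hsba : 0 < Real.sin (tb - ta) :=
      Real.sin_pos_of_pos_of_lt_pi (by linarith) hcase
    constructor
    · rintro ⟨h2, h3⟩
      have hswa : 0 < Real.sin (tw - ta) := by nlinarith
      have hsbw : 0 < Real.sin (tb - tw) := by nlinarith
      constructor
      · by_contra hc
        push_neg at hc
        have hlt : tw < ta := lt_of_le_of_ne hc hwna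
        have h4 : tw - ta < -π := by
          rcases (sin_pos_iff' hwa1 hwa2 s2).1 hswa with ⟨h5, _⟩ | h5
          · linarith
          · exact h5
        rcases (sin_pos_iff' hbw1 hbw2 s3).1 hsbw with ⟨_, h6⟩ | h6 <;> linarith
      · by_contra hc
        push_neg at hc
        have hlt : tb < tw := lt_of_le_of_ne hc (Ne.symm hwnb)
        have h4 : tw - ta < π := by
          rcases (sin_pos_iff' hwa1 hwa2 s2).1 hswa with ⟨_, h5⟩ | h5 <;> linarith
        rcases (sin_pos_iff' hbw1 hbw2 s3).1 hsbw with ⟨h6, _⟩ | h6 <;> linarith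
    · rintro ⟨h4, h5⟩
      have hswa : 0 < Real.sin (tw - ta) :=
        Real.sin_pos_of_pos_of_lt_pi (by linarith) (by linarith)
      have hsbw : 0 < Real.sin (tb - tw) :=
        Real.sin_pos_of_pos_of_lt_pi (by linarith) (by linarith)
      exact ⟨mul_pos hswa hsba, mul_pos hsbw hsba⟩
  · have hgt : π < tb - ta := by
      rcases lt_or_eq_of_le hcase with h | h
      · exact h
      · exfalso; rw [← h] at s1; simp at s1
    rw [if_neg (by linarith : ¬ tb - ta < π)]
    have hta0 : ta < 0 := by linarith
    have htb0 : 0 < tb := by linarith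
    have hsba : Real.sin (tb - ta) < 0 :=
      (sin_neg_iff' hba1 hba2 s1).2 (Or.inr hgt)
    constructor
    · rintro ⟨h2, h3⟩
      have hswa : Real.sin (tw - ta) < 0 := by nlinarith
      have hsbw : Real.sin (tb - tw) < 0 := by nlinarith
      rintro ⟨h4, h5⟩
      have h6 : π < tw - ta := by
        rcases (sin_neg_iff' hwa1 hwa2 s2).1 hswa with ⟨_, h7⟩ | h7
        · linarith
        · exact h7
      have : 0 < Real.sin (tb - tw) :=
        Real.sin_pos_of_pos_of_lt_pi (by linarith) (by linarith)
      linarith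
    · intro hc
      have hc' : tw < ta ∨ tb < tw := by
        by_contra hcc
        push_neg at hcc
        exact hc ⟨lt_of_le_of_ne hcc.1 (Ne.symm hwna), lt_of_le_of_ne hcc.2 hwnb⟩
      have hswa : Real.sin (tw - ta) < 0 ∧ Real.sin (tb - tw) < 0 := by
        rcases hc' with h | h
        · constructor
          · exact (sin_neg_iff' hwa1 hwa2 s2).2 (Or.inl ⟨by linarith, by linarith⟩)
          · exact (sin_neg_iff' hbw1 hbw2 s3).2 (Or.inr (by linarith))
        · constructor
          · exact (sin_neg_iff' hwa1 hwa2 s2).2 (Or.inr (by linarith))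
          · exact (sin_neg_iff' hbw1 hbw2 s3).2 (Or.inl ⟨by linarith, by linarith⟩)
      exact ⟨mul_pos_of_neg_of_neg hswa.1 hsba, mul_pos_of_neg_of_neg hswa.2 hsba⟩



lemma cone_iff_det {a b x : ℂ} (hD : det2 a b ≠ 0) :
    (∃ α β : ℝ, 0 < α ∧ 0 < β ∧ x = (α:ℂ)*a + (β:ℂ)*b) ↔
    (0 < det2 x b * det2 a b ∧ 0 < det2 a x * det2 a b) := by
  constructor
  · rintro ⟨α, β, hα, hβ, rfl⟩
    have h1 : det2 ((α:ℂ)*a + (β:ℂ)*b) b = α * det2 a b := by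
      simp [det2, Complex.add_re, Complex.add_im, Complex.mul_re, Complex.mul_im]; ring
    have h2 : det2 a ((α:ℂ)*a + (β:ℂ)*b) = β * det2 a b := by
      simp [det2, Complex.add_re, Complex.add_im, Complex.mul_re, Complex.mul_im]; ring
    rw [h1, h2]
    constructor
    · have := sq_pos_of_ne_zero hD
      nlinarith
    · have := sq_pos_of_ne_zero hD
      nlinarith
  · rintro ⟨h1, h2⟩
    refine ⟨det2 x b / det2 a b, det2 a x / det2 a b, ?_, ?_, ?_⟩
    · rcases mul_pos_iff.1 h1 with ⟨p, q⟩ | ⟨p, q⟩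
      · exact div_pos p q
      · exact div_pos_of_neg_of_neg p q
    · rcases mul_pos_iff.1 h2 with ⟨p, q⟩ | ⟨p, q⟩
      · exact div_pos p q
      · exact div_pos_of_neg_of_neg p q
    · simp only [det2] at hD ⊢
      have hD' : b.im * a.re - b.re * a.im ≠ 0 := by contrapose! hD; linarith
      apply Complex.ext <;>
        simp only [Complex.add_re, Complex.add_im, Complex.mul_re, Complex.mul_im,
          Complex.ofReal_re, Complex.ofReal_im] <;>
        field_simp <;> ring


lemma bounded_finite {Λ : Set ℂ} {r : ℝ} (hr : 0 < r)
    (hsep : ∀ x ∈ Λ, ∀ y ∈ Λ, x ≠ y → r ≤ dist x y)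
    {s : Set ℂ} (hs : s ⊆ Λ) (hb : Bornology.IsBounded s) : s.Finite := by
  obtain ⟨R, hR⟩ := hb.subset_closedBall 0
  have htb : TotallyBounded (Metric.closedBall (0:ℂ) R) :=
    (isCompact_closedBall 0 R).totallyBounded
  rw [Metric.totallyBounded_iff] at htb
  obtain ⟨t, htf, hcov⟩ := htb (r/2) (by linarith)
  have hsub : s ⊆ ⋃ y ∈ t, s ∩ Metric.ball y (r/2) := by
    intro x hx
    have := hcov (hR hx)
    simp only [Set.mem_iUnion] at this ⊢
    obtain ⟨y, hy, hxy⟩ := this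
    exact ⟨y, hy, hx, hxy⟩
  refine Set.Finite.subset (Set.Finite.biUnion htf ?_) hsub
  intro y _
  apply Set.Subsingleton.finite
  intro x1 h1 x2 h2
  by_contra hne
  have := hsep x1 (hs h1.1) x2 (hs h2.1) hne
  have d1 := h1.2
  have d2 := h2.2
  simp only [Metric.mem_ball] at d1 d2
  have : dist x1 x2 ≤ dist x1 y + dist y x2 := dist_triangle _ _ _
  rw [dist_comm y x2] at this
  linarith [hsep x1 (hs h1.1) x2 (hs h2.1) hne]

lemma vertex_extreme {V : Finset ℂ} (hV3 : 3 ≤ V.card)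
    {a : ℂ} (ha : a ∈ V) (hna : a ∉ convexHull ℝ ((V.erase a : Finset ℂ) : Set ℂ))
    {x y : ℂ} (hx : x ∈ convexHull ℝ (V : Set ℂ)) (hy : y ∈ convexHull ℝ (V : Set ℂ))
    (hxa : x ≠ a) (hseg : a ∈ openSegment ℝ x y) : False := by
  obtain ⟨t, t', ht, ht', htt, hsum⟩ := hseg
  have ht0 : (t:ℂ) ≠ 0 := by exact_mod_cast ne_of_gt ht
  have e0 : (t:ℂ)*x + (t':ℂ)*y = a := by
    rw [← hsum]; simp [Complex.real_smul]
  have c3 : (t:ℂ) + (t':ℂ) = 1 := by exact_mod_cast htt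
  by_cases hya : y = a
  · apply hxa
    rw [hya] at e0
    have : (t:ℂ) * x = (t:ℂ) * a := by linear_combination e0 - a * c3
    exact mul_left_cancel₀ ht0 this
  · have hne : ((V.erase a : Finset ℂ) : Set ℂ).Nonempty := by
      refine Finset.coe_nonempty.2 (Finset.card_pos.1 ?_)
      have := Finset.card_erase_of_mem ha
      omega
    have hVins : (V : Set ℂ) = insert a ((V.erase a : Finset ℂ) : Set ℂ) := by
      rw [Finset.coe_erase, Set.insert_diff_singleton]
      exact (Set.insert_eq_self.2 (Finset.mem_coe.2 ha)).symm
    rw [hVins, convexHull_insert hne, mem_convexJoin] at hx hy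
    obtain ⟨a1, ha1, s1, hs1, hxs⟩ := hx
    obtain ⟨a2, ha2, s2, hs2, hys⟩ := hy
    rw [Set.mem_singleton_iff] at ha1 ha2
    rw [ha1] at hxs
    rw [ha2] at hys
    obtain ⟨p1, q1, hp1, hq1, hpq1, hx1⟩ := hxs
    obtain ⟨p2, q2, hp2, hq2, hpq2, hy2⟩ := hys
    have e1 : (p1:ℂ)*a + (q1:ℂ)*s1 = x := by
      rw [← hx1]; simp [Complex.real_smul]
    have e2 : (p2:ℂ)*a + (q2:ℂ)*s2 = y := by
      rw [← hy2]; simp [Complex.real_smul]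
    have c1 : (p1:ℂ) + (q1:ℂ) = 1 := by exact_mod_cast hpq1
    have c2 : (p2:ℂ) + (q2:ℂ) = 1 := by exact_mod_cast hpq2
    set P := t * q1 with hP
    set Q := t' * q2 with hQ
    have hPQc : ((P:ℝ):ℂ)*a + ((Q:ℝ):ℂ)*a = ((P:ℝ):ℂ)*s1 + ((Q:ℝ):ℂ)*s2 := by
      push_cast [hP, hQ]
      linear_combination -e0 - (t:ℂ)*e1 - (t':ℂ)*e2 + (a*(t:ℂ))*c1 + (a*(t':ℂ))*c2 + a*c3
    have hPQ : 0 ≤ P + Q := by positivity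
    rcases eq_or_lt_of_le hPQ with heq | hlt
    · have hP0 : P = 0 := by nlinarith [mul_nonneg ht'.le hq2]
      have hq10 : q1 = 0 := by
        rcases mul_eq_zero.1 hP0 with h | h
        · exact absurd h (ne_of_gt ht)
        · exact h
      apply hxa
      have hp11 : (p1:ℂ) = 1 := by
        rw [hq10] at c1; simpa using c1
      rw [← e1, hq10, hp11]
      simp
    · apply hna
      have hq1pos : 0 < q1 := by
        rcases lt_or_eq_of_le hq1 with h | h
        · exact h
        · exfalso
          apply hxa
          have hp11 : (p1:ℂ) = 1 := by rw [← h] at c1; simpa using c1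
          rw [← e1, ← h, hp11]; simp
      have hq2pos : 0 < q2 := by
        rcases lt_or_eq_of_le hq2 with h | h
        · exact h
        · exfalso
          apply hya
          have hp21 : (p2:ℂ) = 1 := by rw [← h] at c2; simpa using c2
          rw [← e2, ← h, hp21]; simp
      have hPpos : 0 < P := mul_pos ht hq1pos
      have hQpos : 0 < Q := mul_pos ht' hq2pos
      have hmem := (convex_convexHull ℝ ((V.erase a : Finset ℂ) : Set ℂ)) hs1 hs2
        (le_of_lt (div_pos hPpos hlt))
        (le_of_lt (div_pos hQpos hlt))
        (by field_simp)
      have hPQ0 : ((P+Q:ℝ):ℂ) ≠ 0 := by exact_mod_cast ne_of_gt hlt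
      have hr1 : (P+Q) * (P/(P+Q)) = P := by field_simp
      have hr2 : (P+Q) * (Q/(P+Q)) = Q := by field_simp
      have key : ((P+Q:ℝ):ℂ) * a
          = ((P+Q:ℝ):ℂ) * (((P/(P+Q):ℝ):ℂ) * s1 + ((Q/(P+Q):ℝ):ℂ) * s2) := by
        rw [mul_add, ← mul_assoc, ← mul_assoc, ← Complex.ofReal_mul, ← Complex.ofReal_mul,
          hr1, hr2]
        push_cast at hPQc ⊢
        linear_combination hPQc
      have haeq : a = (P/(P+Q)) • s1 + (Q/(P+Q)) • s2 := by
        simp only [Complex.real_smul]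
        exact mul_left_cancel₀ hPQ0 key
      nth_rewrite 2 [haeq]
      exact hmem


lemma convex_diff_extreme {K : Set ℂ} (hK : Convex ℝ K) (E : Finset ℂ)
    (hE : ∀ a ∈ E, ∀ x ∈ K, ∀ y ∈ K, x ≠ a → a ∈ openSegment ℝ x y → False) :
    Convex ℝ (K \ ↑E) := by
  classical
  induction E using Finset.induction_on with
  | empty => simpa using hK
  | @insert a s hans ih =>
    have hconv : Convex ℝ (K \ ↑s) := ih (fun b hb => hE b (Finset.mem_insert_of_mem hb))
    have hdiff : K \ ↑(insert a s) = (K \ ↑s) \ {a} := by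
      ext w; simp [Finset.coe_insert, and_comm]; tauto
    rw [hdiff]
    intro x hx y hy p q hp hq hpq
    have hz : p • x + q • y ∈ K \ ↑s := hconv hx.1 hy.1 hp hq hpq
    refine ⟨hz, ?_⟩
    simp only [Set.mem_singleton_iff]
    intro hza
    rcases eq_or_lt_of_le hp with hp0 | hp0
    · have : q = 1 := by linarith
      rw [← hp0, this] at hza
      simp at hza
      exact hy.2 (by simp [hza])
    · rcases eq_or_lt_of_le hq with hq0 | hq0
      · have : p = 1 := by linarith
        rw [← hq0, this] at hza
        simp at hza
        exact hx.2 (by simp [hza])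
      · exact hE a (Finset.mem_insert_self a s) x hx.1.1 y hy.1.1
          (fun hxe => hx.2 (by simp [hxe]))
          ⟨p, q, hp0, hq0, hpq, hza⟩

lemma det2_add_mul (z w w' : ℂ) (t : ℝ) :
    det2 z (w + (t:ℂ)*w') = det2 z w + t * det2 z w' := by
  simp [det2, Complex.add_re, Complex.add_im, Complex.mul_re, Complex.mul_im]; ring

lemma collinear_of_fiber {u x y z : ℂ} (hu : u ≠ 0)
    (h1 : det2 u x = det2 u y) (h2 : det2 u y = det2 u z) :
    Collinear ℝ ({x, y, z} : Set ℂ) := by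
  have hx : det2 u (x - y) = 0 := by rw [det2_sub_right, h1, sub_self]
  have hz : det2 u (z - y) = 0 := by rw [det2_sub_right, h2, sub_self]
  obtain ⟨r1, hr1⟩ := (det2_eq_zero_iff hu _).1 hx
  obtain ⟨r2, hr2⟩ := (det2_eq_zero_iff hu _).1 hz
  rw [collinear_iff_of_mem (show y ∈ ({x,y,z}:Set ℂ) by simp)]
  refine ⟨u, fun p hp => ?_⟩
  simp only [Set.mem_insert_iff, Set.mem_singleton_iff] at hp
  rcases hp with rfl | rfl | rfl
  · exact ⟨r1, by simp only [Complex.real_smul, vadd_eq_add]; linear_combination hr1⟩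
  · exact ⟨0, by simp⟩
  · exact ⟨r2, by simp only [Complex.real_smul, vadd_eq_add]; linear_combination hr2⟩

lemma no_three_fiber {V : Finset ℂ}
    (hvert : ∀ v ∈ V, v ∉ convexHull ℝ ((V.erase v : Finset ℂ) : Set ℂ))
    {u : ℂ} (hu : u ≠ 0) {x y z : ℂ} (hx : x ∈ V) (hy : y ∈ V) (hz : z ∈ V)
    (hxy : x ≠ y) (hxz : x ≠ z) (hyz : y ≠ z)
    (h1 : det2 u x = det2 u y) (h2 : det2 u y = det2 u z) : False := by
  classical
  have hcol := collinear_of_fiber hu h1 h2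
  have mid : ∀ a b c : ℂ, a ∈ V → b ∈ V → c ∈ V → c ≠ a → c ≠ b → Wbtw ℝ a c b → False := by
    intro a b c ha hb hc' hca hcb hw
    apply hvert c hc'
    have hseg : c ∈ segment ℝ a b := hw.mem_segment
    rw [← convexHull_pair] at hseg
    refine convexHull_mono ?_ hseg
    intro p hp
    simp only [Set.mem_insert_iff, Set.mem_singleton_iff] at hp
    rcases hp with rfl | rfl
    · simp only [Finset.coe_erase, Set.mem_diff, Set.mem_singleton_iff]
      exact ⟨Finset.mem_coe.2 ha, fun h => hca h.symm⟩
    · simp only [Finset.coe_erase, Set.mem_diff, Set.mem_singleton_iff]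
      exact ⟨Finset.mem_coe.2 hb, fun h => hcb h.symm⟩
  rcases hcol.wbtw_or_wbtw_or_wbtw with h | h | h
  · exact mid x z y hx hz hy (Ne.symm hxy) hyz h
  · exact mid y x z hy hx hz (Ne.symm hyz) (Ne.symm hxz) h
  · exact mid z y x hz hy hx hxz hxy h

lemma fiber_card {V : Finset ℂ}
    (hvert : ∀ v ∈ V, v ∉ convexHull ℝ ((V.erase v : Finset ℂ) : Set ℂ))
    {u : ℂ} (hu0 : u ≠ 0) {v : ℂ} (hv : v ∈ V)
    (hline : ∃ v' ∈ V, v' ≠ v ∧ v' ∈ lineDir u v) :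
    (V.filter (fun w => det2 u w = det2 u v)).card = 2 := by
  classical
  obtain ⟨v', hv', hne, hmem⟩ := hline
  have hf : det2 u v' = det2 u v := (mem_lineDir hu0 v v').1 hmem
  have hsub : ({v', v} : Finset ℂ) ⊆ V.filter (fun w => det2 u w = det2 u v) := by
    intro w hw
    rcases Finset.mem_insert.1 hw with rfl | hw
    · exact Finset.mem_filter.2 ⟨hv', hf⟩
    · rw [Finset.mem_singleton.1 hw]
      exact Finset.mem_filter.2 ⟨hv, rfl⟩
  have h2 : 2 ≤ (V.filter (fun w => det2 u w = det2 u v)).card := by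
    have hc2 : ({v', v} : Finset ℂ).card = 2 := by
      rw [Finset.card_insert_of_notMem (by simp [hne]), Finset.card_singleton]
    rw [← hc2]
    exact Finset.card_le_card hsub
  have h3 : (V.filter (fun w => det2 u w = det2 u v)).card ≤ 2 := by
    by_contra hc
    push_neg at hc
    obtain ⟨a, b, c, ha, hb, hcm, hab, hac, hbc⟩ := Finset.two_lt_card_iff.1 hc
    have ha' := Finset.mem_filter.1 ha
    have hb' := Finset.mem_filter.1 hb
    have hc' := Finset.mem_filter.1 hcm
    exact no_three_fiber hvert hu0 ha'.1 hb'.1 hc'.1 hab hac hbc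
      (ha'.2.trans hb'.2.symm) (hb'.2.trans hc'.2.symm)
  omega

lemma side_even {V : Finset ℂ}
    (hvert : ∀ v ∈ V, v ∉ convexHull ℝ ((V.erase v : Finset ℂ) : Set ℂ))
    {u : ℂ} (hu0 : u ≠ 0)
    (hline : ∀ v ∈ V, ∃ v' ∈ V, v' ≠ v ∧ v' ∈ lineDir u v)
    (p : ℝ → Prop) [DecidablePred p] :
    Even ((V.filter (fun w => p (det2 u w))).card) := by
  classical
  set s := V.filter (fun w => p (det2 u w)) with hs
  have hmapsto : ∀ x ∈ s, det2 u x ∈ s.image (fun w => det2 u w) :=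
    fun x hx => Finset.mem_image_of_mem _ hx
  rw [Finset.card_eq_sum_card_fiberwise hmapsto]
  have hfib : ∀ d ∈ s.image (fun w => det2 u w),
      (s.filter (fun w => det2 u w = d)).card = 2 := by
    intro d hd
    obtain ⟨w, hw, hwd⟩ := Finset.mem_image.1 hd
    have hw' := Finset.mem_filter.1 hw
    have heq : s.filter (fun w' => det2 u w' = d)
        = V.filter (fun w' => det2 u w' = det2 u w) := by
      ext w'
      simp only [hs, Finset.mem_filter, and_assoc]
      constructor
      · rintro ⟨h1, _, h3⟩
        exact ⟨h1, by rw [h3, ← hwd]⟩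
      · rintro ⟨h1, h2⟩
        refine ⟨h1, ?_, by rw [h2, hwd]⟩
        rw [h2]
        exact hw'.2
    rw [heq]
    exact fiber_card hvert hu0 hw'.1 (hline w hw'.1)
  rw [Finset.sum_congr rfl hfib, Finset.sum_const, smul_eq_mul]
  exact even_two.mul_left _

lemma exists_triple {V : Finset ℂ} (h2 : 2 ≤ V.card)
    (hnc : ¬ Collinear ℝ (V : Set ℂ)) :
    ∃ a ∈ V, ∃ b ∈ V, ∃ c ∈ V, det2 (b - a) (c - a) ≠ 0 := by
  classical
  by_contra hc
  push_neg at hc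
  apply hnc
  obtain ⟨a, ha, b, hb, hab⟩ := Finset.one_lt_card.1 (show 1 < V.card by omega)
  have hba : b - a ≠ 0 := sub_ne_zero.2 (Ne.symm hab)
  rw [collinear_iff_of_mem (Finset.mem_coe.2 ha)]
  refine ⟨b - a, fun p hp => ?_⟩
  have h0 := hc a ha b hb p (Finset.mem_coe.1 hp)
  obtain ⟨r, hr⟩ := (det2_eq_zero_iff hba _).1 h0
  exact ⟨r, by simp only [Complex.real_smul, vadd_eq_add]; linear_combination hr⟩

lemma exists_good_center {V : Finset ℂ} (h3 : 3 ≤ V.card)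
    (hnc : ¬ Collinear ℝ (V : Set ℂ)) :
    ∃ o : ℂ, o ∈ convexHull ℝ (V : Set ℂ) ∧
      ∀ x ∈ V, ∀ y ∈ V, x ≠ y → det2 (y - x) (o - x) ≠ 0 := by
  classical
  obtain ⟨a, ha, b, hb, c, hcm, habc⟩ := exists_triple (by omega) hnc
  -- Step 1 : pick t ∈ (0,1) with d := (b-a) + t(c-a) not parallel to any difference
  have hBadT : (⋃ x ∈ V, ⋃ y ∈ V,
      {t : ℝ | x ≠ y ∧ det2 (y - x) ((b - a) + (t:ℂ)*(c - a)) = 0}).Finite := by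
    refine Set.Finite.biUnion V.finite_toSet fun x _ =>
      Set.Finite.biUnion V.finite_toSet fun y _ => Set.Subsingleton.finite ?_
    intro t1 h1 t2 h2
    obtain ⟨hxy, e1⟩ := h1
    obtain ⟨-, e2⟩ := h2
    rw [det2_add_mul] at e1 e2
    rcases eq_or_ne (det2 (y - x) (c - a)) 0 with hsl | hsl
    · exfalso
      have hz : y - x ≠ 0 := sub_ne_zero.2 (Ne.symm hxy)
      have hcb : det2 (y - x) (b - a) = 0 := by
        rw [hsl] at e1; linarith [e1]
      obtain ⟨r1, hr1⟩ := (det2_eq_zero_iff hz _).1 hsl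
      obtain ⟨r2, hr2⟩ := (det2_eq_zero_iff hz _).1 hcb
      apply habc
      rw [hr1, hr2, det2_mul_left, det2_mul_right, det2_self]
      ring
    · have : (t1 - t2) * det2 (y - x) (c - a) = 0 := by linarith
      rcases mul_eq_zero.1 this with h | h
      · linarith
      · exact absurd h hsl
  obtain ⟨t, htIoo, htbad⟩ :=
    ((Set.Ioo_infinite (show (0:ℝ) < 1 by norm_num)).diff hBadT).nonempty
  obtain ⟨ht0, ht1⟩ := htIoo
  set d : ℂ := (b - a) + (t:ℂ)*(c - a) with hd
  have hdgood : ∀ x ∈ V, ∀ y ∈ V, x ≠ y → det2 (y - x) d ≠ 0 := by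
    intro x hx y hy hxy hcontra
    exact htbad (Set.mem_biUnion hx (Set.mem_biUnion hy ⟨hxy, hcontra⟩))
  -- Step 2 : pick s ∈ (0, 1/2) with o := a + s d not collinear with any pair
  have hBadS : (⋃ x ∈ V, ⋃ y ∈ V,
      {s : ℝ | x ≠ y ∧ det2 (y - x) ((a - x) + (s:ℂ)*d) = 0}).Finite := by
    refine Set.Finite.biUnion V.finite_toSet fun x hx =>
      Set.Finite.biUnion V.finite_toSet fun y hy => Set.Subsingleton.finite ?_
    intro s1 h1 s2 h2
    obtain ⟨hxy, e1⟩ := h1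
    obtain ⟨-, e2⟩ := h2
    rw [det2_add_mul] at e1 e2
    have : (s1 - s2) * det2 (y - x) d = 0 := by linarith
    rcases mul_eq_zero.1 this with h | h
    · linarith
    · exact absurd h (hdgood x hx y hy hxy)
  obtain ⟨s, hsIoo, hsbad⟩ :=
    ((Set.Ioo_infinite (show (0:ℝ) < 1/2 by norm_num)).diff hBadS).nonempty
  obtain ⟨hs0, hs12⟩ := hsIoo
  refine ⟨a + (s:ℂ)*d, ?_, ?_⟩
  · -- convex hull membership
    have hK := convex_convexHull ℝ (V : Set ℂ)
    have haK : a ∈ convexHull ℝ (V : Set ℂ) := subset_convexHull ℝ _ (Finset.mem_coe.2 ha)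
    have hbK : b ∈ convexHull ℝ (V : Set ℂ) := subset_convexHull ℝ _ (Finset.mem_coe.2 hb)
    have hcK : c ∈ convexHull ℝ (V : Set ℂ) := subset_convexHull ℝ _ (Finset.mem_coe.2 hcm)
    set r2 : ℝ := s with hr2def
    set r3 : ℝ := s * t with hr3def
    have hr23 : 0 < r2 + r3 := by positivity
    have hmK : (r2/(r2+r3)) • b + (r3/(r2+r3)) • c ∈ convexHull ℝ (V : Set ℂ) :=
      hK hbK hcK (le_of_lt (div_pos (by positivity) hr23))
        (le_of_lt (div_pos (by positivity) hr23)) (by field_simp)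
    have hr1 : (0:ℝ) ≤ 1 - s - s*t := by nlinarith
    have hoK := hK haK hmK hr1 (le_of_lt hr23) (by ring)
    have hoeq : a + (s:ℂ)*d
        = (1 - s - s*t) • a + (r2+r3) • ((r2/(r2+r3)) • b + (r3/(r2+r3)) • c) := by
      simp only [Complex.real_smul, smul_add, smul_smul]
      have e1 : (r2 + r3) * (r2/(r2+r3)) = r2 := by field_simp
      have e2 : (r2 + r3) * (r3/(r2+r3)) = r3 := by field_simp
      rw [← mul_assoc, ← mul_assoc, ← Complex.ofReal_mul, ← Complex.ofReal_mul, e1, e2, hd, hr2def, hr3def]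
      push_cast
      ring
    rw [hoeq]
    exact hoK
  · intro x hx y hy hxy hcontra
    apply hsbad
    refine Set.mem_biUnion hx (Set.mem_biUnion hy ⟨hxy, ?_⟩)
    have : a + (s:ℂ)*d - x = (a - x) + (s:ℂ)*d := by ring
    rw [← this]
    exact hcontra

lemma det2_comb (z w1 w2 : ℂ) (r r' : ℝ) :
    det2 z ((r:ℂ)*w1 + (r':ℂ)*w2) = r * det2 z w1 + r' * det2 z w2 := by
  simp [det2, Complex.add_re, Complex.add_im, Complex.mul_re, Complex.mul_im]; ring

lemma far_iff_cone {V : Finset ℂ} (hV3 : 3 ≤ V.card)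
    (hvert : ∀ v ∈ V, v ∉ convexHull ℝ ((V.erase v : Finset ℂ) : Set ℂ))
    {o : ℂ} (ho : o ∈ convexHull ℝ (V : Set ℂ))
    (hgood : ∀ x ∈ V, ∀ y ∈ V, x ≠ y → det2 (y - x) (o - x) ≠ 0)
    {u : ℂ} (hu : u ≠ 0) {x y w : ℂ} (hx : x ∈ V) (hy : y ∈ V) (hw : w ∈ V)
    (hxy : x ≠ y) (hwx : w ≠ x) (hwy : w ≠ y)
    (hfxy : det2 u x = det2 u y)
    (hfw : det2 u w ≠ det2 u x) (hfo : det2 u o ≠ det2 u x) :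
    ((det2 u w - det2 u x) * (det2 u o - det2 u x) < 0 ↔
      ∃ α β : ℝ, 0 < α ∧ 0 < β ∧ w - o = (α:ℂ)*(x - o) + (β:ℂ)*(y - o)) := by
  classical
  have hK := convex_convexHull ℝ (V : Set ℂ)
  have hxK : x ∈ convexHull ℝ (V : Set ℂ) := subset_convexHull ℝ _ (Finset.mem_coe.2 hx)
  have hyK : y ∈ convexHull ℝ (V : Set ℂ) := subset_convexHull ℝ _ (Finset.mem_coe.2 hy)
  have hwK : w ∈ convexHull ℝ (V : Set ℂ) := subset_convexHull ℝ _ (Finset.mem_coe.2 hw)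
  have how : o ≠ w := by
    intro h
    apply hgood w hw y hy hwy
    rw [← h]
    simp [det2, sub_self]
  have hyx0 : det2 u (y - x) = 0 := by rw [det2_sub_right, hfxy, sub_self]
  obtain ⟨r', hr'⟩ := (det2_eq_zero_iff hu _).1 hyx0
  have hr'0 : r' ≠ 0 := by
    intro h
    rw [h] at hr'
    simp only [Complex.ofReal_zero, zero_mul, sub_eq_zero] at hr'
    exact hxy hr'.symm
  set c := det2 u x with hc
  constructor
  · -- far ⇒ cone
    intro hfar
    set p := det2 u o - c with hp
    set q := det2 u w - c with hq
    have hq0 : q ≠ 0 := sub_ne_zero.2 hfw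
    have hp0 : p ≠ 0 := sub_ne_zero.2 hfo
    have hqp : q - p ≠ 0 := by
      intro h
      have hqq : q = p := by linarith
      rw [hqq] at hfar
      nlinarith [sq_nonneg p]
    set T := -p/(q-p) with hT
    have hT0 : 0 < T := by
      rcases mul_neg_iff.1 hfar with ⟨h1, h2⟩ | ⟨h1, h2⟩
      · exact div_pos (by linarith) (by linarith)
      · exact div_pos_of_neg_of_neg (by linarith) (by linarith)
    have hT1 : T < 1 := by
      rw [hT, div_lt_one_iff]
      rcases mul_neg_iff.1 hfar with ⟨h1, h2⟩ | ⟨h1, h2⟩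
      · left; constructor <;> linarith
      · right; right; constructor <;> linarith
    have hTc : (T:ℂ) ≠ 0 := by exact_mod_cast ne_of_gt hT0
    set xs := o + (T:ℂ)*(w - o) with hxs
    have hfxs : det2 u xs = c := by
      have h1 : det2 u xs = det2 u o + T * (det2 u w - det2 u o) := by
        rw [hxs, det2_add_mul, det2_sub_right]
      have h2 : T * (q - p) = -p := by rw [hT]; field_simp
      have h3 : det2 u w - det2 u o = q - p := by rw [hp, hq]; ring
      rw [h1, h3, h2]
      simp only [hp]
      ring
    have hxsK : xs ∈ convexHull ℝ (V : Set ℂ) := by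
      have heq : xs = (1-T) • o + T • w := by
        simp only [Complex.real_smul, hxs]; push_cast; ring
      rw [heq]
      exact hK ho hwK (by linarith) (le_of_lt hT0) (by ring)
    have hxsx : det2 u (xs - x) = 0 := by rw [det2_sub_right, hfxs, hc, sub_self]
    obtain ⟨r, hr⟩ := (det2_eq_zero_iff hu _).1 hxsx
    set S := r / r' with hS
    have hxs_eq : xs = x + (S:ℂ)*(y - x) := by
      rw [hr', hS]
      have hcast : ((r/r' : ℝ):ℂ) * (((r':ℝ):ℂ) * u) = ((r:ℝ):ℂ) * u := by
        rw [← mul_assoc, ← Complex.ofReal_mul, div_mul_cancel₀ _ hr'0]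
      rw [hcast, ← hr]
      ring
    rcases lt_trichotomy S 0 with hS0 | hS0 | hS0
    · -- S < 0 : x lies strictly between xs and y : contradiction
      exfalso
      have hSm1 : S - 1 ≠ 0 := ne_of_lt (by linarith)
      set μ := S/(S-1) with hμ
      have hμ0 : 0 < μ := div_pos_of_neg_of_neg hS0 (by linarith)
      have hμ1 : μ < 1 := by
        rw [hμ, div_lt_one_iff]
        right; right; constructor <;> linarith
      have hxsne : xs ≠ x := by
        intro h
        have h0 : (r:ℂ) * u = 0 := by rw [← hr, h]; ring
        rcases mul_eq_zero.1 h0 with h' | h'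
        · have hr0 : r = 0 := by exact_mod_cast h'
          rw [hS, hr0, zero_div] at hS0
          exact lt_irrefl _ hS0
        · exact hu h'
      have hkey : (1-μ)*S + μ = 0 := by
        rw [hμ]; field_simp; ring
      have hkeyc : ((1:ℂ)-(μ:ℝ))*((S:ℝ):ℂ) + ((μ:ℝ):ℂ) = 0 := by exact_mod_cast hkey
      refine vertex_extreme hV3 hx (hvert x hx) hxsK hyK hxsne
        ⟨1-μ, μ, by linarith, hμ0, by ring, ?_⟩
      simp only [Complex.real_smul]
      push_cast
      linear_combination ((1:ℂ)-(μ:ℝ))*hxs_eq + (y - x)*hkeyc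
    · -- S = 0 : xs = x, contradicts hgood x w
      exfalso
      have hrr : r = 0 := by
        rw [hS] at hS0
        rcases div_eq_zero_iff.1 hS0 with h | h
        · exact h
        · exact absurd h hr'0
      rw [hrr] at hr
      simp only [Complex.ofReal_zero, zero_mul, sub_eq_zero] at hr
      -- hr : xs = x
      apply hgood x hx w hw (Ne.symm hwx)
      have hxv : x = o + (T:ℂ)*(w - o) := by rw [← hr, hxs]
      rw [hxv]
      simp only [det2, Complex.add_re, Complex.add_im, Complex.sub_re, Complex.sub_im,
        Complex.mul_re, Complex.mul_im, Complex.ofReal_re, Complex.ofReal_im]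
      ring
    · rcases lt_trichotomy S 1 with hS1 | hS1 | hS1
      · -- 0 < S < 1 : cone membership
        refine ⟨(1-S)/T, S/T, div_pos (by linarith) hT0, div_pos hS0 hT0, ?_⟩
        have H : (T:ℂ)*(w - o) = ((1-S:ℝ):ℂ)*(x-o) + ((S:ℝ):ℂ)*(y-o) := by
          push_cast
          linear_combination hxs_eq - hxs
        apply mul_left_cancel₀ hTc
        rw [H]
        have e1 : T * ((1-S)/T) = 1-S := by field_simp
        have e2 : T * (S/T) = S := by field_simp
        rw [mul_add, ← mul_assoc, ← mul_assoc, ← Complex.ofReal_mul, ← Complex.ofReal_mul, e1, e2]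
      · -- S = 1 : xs = y, contradicts hgood y w
        exfalso
        have hxsy : xs = y := by
          rw [hxs_eq, hS1]
          push_cast
          ring
        apply hgood y hy w hw (Ne.symm hwy)
        have hyv : y = o + (T:ℂ)*(w - o) := by rw [← hxsy, hxs]
        rw [hyv]
        simp only [det2, Complex.add_re, Complex.add_im, Complex.sub_re, Complex.sub_im,
          Complex.mul_re, Complex.mul_im, Complex.ofReal_re, Complex.ofReal_im]
        ring
      · -- S > 1 : y lies strictly between x and xs : contradiction
        exfalso
        set μ := 1/S with hμ
        have hμ0 : 0 < μ := by positivity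
        have hμ1 : μ < 1 := by
          rw [hμ, div_lt_one_iff]
          left; constructor <;> linarith
        have hkey : μ*S - 1 = 0 := by
          rw [hμ]; field_simp; ring
        have hkeyc : ((μ:ℝ):ℂ)*((S:ℝ):ℂ) - 1 = 0 := by exact_mod_cast hkey
        refine vertex_extreme hV3 hy (hvert y hy) hxK hxsK hxy
          ⟨1-μ, μ, by linarith, hμ0, by ring, ?_⟩
        simp only [Complex.real_smul]
        push_cast
        linear_combination ((μ:ℝ):ℂ)*hxs_eq + (y - x)*hkeyc
  · -- cone ⇒ far
    rintro ⟨α, β, hα, hβ, heq⟩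
    set T := α + β with hTd
    have hT0 : 0 < T := by positivity
    have hTr : T ≠ 0 := ne_of_gt hT0
    have hTc : (T:ℂ) ≠ 0 := by exact_mod_cast hTr
    set xs := ((α/T:ℝ):ℂ)*x + ((β/T:ℝ):ℂ)*y with hxs
    have hxsK : xs ∈ convexHull ℝ (V : Set ℂ) := by
      have hmem := hK hxK hyK (le_of_lt (div_pos hα hT0)) (le_of_lt (div_pos hβ hT0))
        (by field_simp; linarith)
      have hxseq : (α/T) • x + (β/T) • y = xs := by simp [Complex.real_smul, hxs]
      rw [hxseq] at hmem
      exact hmem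
    have e1 : T * (α/T) = α := by field_simp
    have e2 : T * (β/T) = β := by field_simp
    have hw_eq : (T:ℂ)*(xs - o) = w - o := by
      rw [hxs, mul_sub, mul_add, ← mul_assoc, ← mul_assoc, ← Complex.ofReal_mul,
        ← Complex.ofReal_mul, e1, e2]
      have hTdc : ((T:ℝ):ℂ) = ((α:ℝ):ℂ) + ((β:ℝ):ℂ) := by exact_mod_cast congrArg (fun z : ℝ => (z:ℂ)) hTd
      push_cast
      push_cast at hTdc
      linear_combination -heq - o * hTdc
    have hfxs : det2 u xs = c := by
      rw [hxs, det2_comb, ← hfxy]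
      have hsum : α/T + β/T = 1 := by field_simp; linarith
      linear_combination c * hsum
    have hfw_rel : det2 u w - c = (1 - T) * (det2 u o - c) := by
      have h1 : det2 u (w - o) = T * det2 u (xs - o) := by
        rw [← hw_eq]
        have : det2 u ((T:ℂ)*(xs - o)) = T * det2 u (xs - o) := by
          simp [det2, Complex.mul_re, Complex.mul_im]; ring
        rw [this]
      rw [det2_sub_right, det2_sub_right, hfxs] at h1
      linear_combination h1
    have hT1 : 1 < T := by
      rcases lt_trichotomy T 1 with h | h | h
      · exfalso
        have hwseg : w = o + (T:ℂ)*(xs - o) := by rw [hw_eq]; ring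
        refine vertex_extreme hV3 hw (hvert w hw) ho hxsK how
          ⟨1-T, T, by linarith, hT0, by ring, ?_⟩
        simp only [Complex.real_smul]
        push_cast
        linear_combination -hwseg
      · exfalso
        apply hfw
        have : det2 u w - c = 0 := by rw [hfw_rel, h]; ring
        linarith
      · exact h
    rw [hfw_rel]
    have hsq : 0 < (det2 u o - c)^2 := sq_pos_of_ne_zero (sub_ne_zero.2 hfo)
    nlinarith

lemma pos_scaled_iff {k1 k2 s1 s2 : ℝ} (h1 : 0 < k1) (h2 : 0 < k2) :
    (0 < (k1*s1)*(k2*s2)) ↔ 0 < s1*s2 := by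
  constructor
  · intro h
    by_contra hn
    push_neg at hn
    nlinarith [mul_pos h1 h2]
  · intro h
    have := mul_pos h1 h2
    nlinarith

open scoped Classical in
lemma rank_parity {V : Finset ℂ} (hV3 : 3 ≤ V.card)
    (hvert : ∀ v ∈ V, v ∉ convexHull ℝ ((V.erase v : Finset ℂ) : Set ℂ))
    {o : ℂ} (ho : o ∈ convexHull ℝ (V : Set ℂ))
    (hgood : ∀ x ∈ V, ∀ y ∈ V, x ≠ y → det2 (y - x) (o - x) ≠ 0)
    {u : ℂ} (hu : u ≠ 0)
    (hline : ∀ v ∈ V, ∃ v' ∈ V, v' ≠ v ∧ v' ∈ lineDir u v)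
    {x y : ℂ} (hx : x ∈ V) (hy : y ∈ V) (hxy : x ≠ y)
    (hfxy : det2 u x = det2 u y) :
    ¬ (Even ((V.filter (fun w => Complex.arg (w - o) < Complex.arg (x - o))).card) ↔
       Even ((V.filter (fun w => Complex.arg (w - o) < Complex.arg (y - o))).card)) := by
  have hother : ∀ w ∈ V, ∃ w' ∈ V, w' ≠ w := by
    intro w hw
    obtain ⟨a1, ha1, a2, ha2, h12⟩ := Finset.one_lt_card.1 (show 1 < V.card by omega)
    rcases eq_or_ne a1 w with rfl | h
    · exact ⟨a2, ha2, h12.symm⟩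
    · exact ⟨a1, ha1, h⟩
  have hoV : ∀ w ∈ V, w - o ≠ 0 := by
    intro w hw
    obtain ⟨w', hw', hne⟩ := hother w hw
    intro h
    apply hgood w hw w' hw' (Ne.symm hne)
    have how : o = w := by linear_combination -h
    rw [← how]
    simp [det2, sub_self]
  have hflip : ∀ w₁ w₂ : ℂ, det2 (w₂ - w₁) (o - w₁) = det2 (w₁ - o) (w₂ - o) := by
    intro w₁ w₂
    simp only [det2, Complex.sub_re, Complex.sub_im]
    ring
  have hdet_oo : ∀ w₁ ∈ V, ∀ w₂ ∈ V, w₁ ≠ w₂ → det2 (w₁ - o) (w₂ - o) ≠ 0 := by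
    intro w₁ h1 w₂ h2 hne
    rw [← hflip]
    exact hgood w₁ h1 w₂ h2 hne
  have hsin : ∀ w₁ ∈ V, ∀ w₂ ∈ V, w₁ ≠ w₂ →
      Real.sin (Complex.arg (w₂ - o) - Complex.arg (w₁ - o)) ≠ 0 := by
    intro w₁ h1 w₂ h2 hne hcon
    apply hdet_oo w₁ h1 w₂ h2 hne
    rw [det2_sin, hcon, mul_zero]
  have hθinj : ∀ w₁ ∈ V, ∀ w₂ ∈ V,
      Complex.arg (w₁ - o) = Complex.arg (w₂ - o) → w₁ = w₂ := by
    intro w₁ h1 w₂ h2 heq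
    by_contra hne
    apply hsin w₁ h1 w₂ h2 hne
    rw [heq, sub_self, Real.sin_zero]
  have aux : ∀ a ∈ V, ∀ b ∈ V, a ≠ b → det2 u a = det2 u b →
      Complex.arg (a - o) < Complex.arg (b - o) →
      ¬ (Even ((V.filter (fun w => Complex.arg (w - o) < Complex.arg (a - o))).card) ↔
         Even ((V.filter (fun w => Complex.arg (w - o) < Complex.arg (b - o))).card)) := by
    intro a ha b hb hab hfab hθab
    set θ : ℂ → ℝ := fun w => Complex.arg (w - o) with hθ
    set c := det2 u a with hc
    have hPcard : (V.filter (fun w => det2 u w = c)).card = 2 :=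
      fiber_card hvert hu ha (hline a ha)
    have hPpair : ({b, a} : Finset ℂ) = V.filter (fun w => det2 u w = c) := by
      apply Finset.eq_of_subset_of_card_le
      · intro w hw
        rcases Finset.mem_insert.1 hw with rfl | hw
        · exact Finset.mem_filter.2 ⟨hb, hfab.symm⟩
        · rw [Finset.mem_singleton.1 hw]
          exact Finset.mem_filter.2 ⟨ha, rfl⟩
      · rw [hPcard, Finset.card_insert_of_notMem (by simp [Ne.symm hab]),
          Finset.card_singleton]
    have hbc : det2 u b = c := hfab.symm
    have hwnot : ∀ w ∈ V, w ≠ a → w ≠ b → det2 u w ≠ c := by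
      intro w hw hwa hwb hcon
      have hmem : w ∈ ({b, a} : Finset ℂ) := by
        rw [hPpair]; exact Finset.mem_filter.2 ⟨hw, hcon⟩
      rcases Finset.mem_insert.1 hmem with rfl | h
      · exact hwb rfl
      · exact hwa (Finset.mem_singleton.1 h)
    have hfo : det2 u o ≠ c := by
      intro hcon
      have h1 : det2 u (o - a) = 0 := by rw [det2_sub_right, hcon, hc, sub_self]
      have h2 : det2 u (b - a) = 0 := by rw [det2_sub_right, ← hfab, hc, sub_self]
      obtain ⟨r1, hr1⟩ := (det2_eq_zero_iff hu _).1 h1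
      obtain ⟨r2, hr2⟩ := (det2_eq_zero_iff hu _).1 h2
      apply hgood a ha b hb hab
      rw [hr1, hr2, det2_mul_left, det2_mul_right, det2_self]
      ring
    have hpo : det2 u o - c ≠ 0 := sub_ne_zero.2 hfo
    have hchar : ∀ w ∈ V, w ≠ a → w ≠ b →
        ((det2 u w - c) * (det2 u o - c) < 0 ↔
          (if θ b - θ a < Real.pi then (θ a < θ w ∧ θ w < θ b)
           else ¬(θ a < θ w ∧ θ w < θ b))) := by
      intro w hw hwa hwb
      rw [hc, far_iff_cone hV3 hvert ho hgood hu ha hb hw hab hwa hwb hfab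
        (by rw [← hc]; exact hwnot w hw hwa hwb) (by rw [← hc]; exact hfo)]
      rw [cone_iff_det (hdet_oo a ha b hb hab)]
      rw [det2_sin (w-o) (b-o), det2_sin (a-o) (b-o), det2_sin (a-o) (w-o)]
      have na : 0 < ‖a-o‖ := norm_pos_iff.mpr (hoV a ha)
      have nb : 0 < ‖b-o‖ := norm_pos_iff.mpr (hoV b hb)
      have nw : 0 < ‖w-o‖ := norm_pos_iff.mpr (hoV w hw)
      rw [show ‖w-o‖ * ‖b-o‖ * Real.sin ((b-o).arg - (w-o).arg)
          = (‖w-o‖ * ‖b-o‖) * Real.sin (θ b - θ w) by rw [hθ]]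
      rw [show ‖a-o‖ * ‖b-o‖ * Real.sin ((b-o).arg - (a-o).arg)
          = (‖a-o‖ * ‖b-o‖) * Real.sin (θ b - θ a) by rw [hθ]]
      rw [show ‖a-o‖ * ‖w-o‖ * Real.sin ((w-o).arg - (a-o).arg)
          = (‖a-o‖ * ‖w-o‖) * Real.sin (θ w - θ a) by rw [hθ]]
      rw [pos_scaled_iff (by positivity) (by positivity),
        pos_scaled_iff (by positivity) (by positivity)]
      rw [and_comm]
      exact cone_interval (Complex.neg_pi_lt_arg _) (Complex.arg_le_pi _)
        (Complex.neg_pi_lt_arg _) (Complex.arg_le_pi _)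
        (Complex.neg_pi_lt_arg _) (Complex.arg_le_pi _) hθab
        (hsin a ha b hb hab) (hsin a ha w hw (Ne.symm hwa)) (hsin w hw b hb hwb)
    have hfar_iff : ∀ w ∈ V, w ≠ a → w ≠ b →
        (((det2 u w - c) * (det2 u o - c) < 0) ↔
          (if 0 < det2 u o - c then det2 u w < c else c < det2 u w)) := by
      intro w hw hwa hwb
      have hd := hwnot w hw hwa hwb
      rcases lt_or_gt_of_ne hpo with h | h
      · rw [if_neg (by linarith)]
        constructor
        · intro hf
          rcases mul_neg_iff.1 hf with ⟨h1, h2⟩ | ⟨h1, h2⟩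
          · linarith
          · linarith
        · intro hlt
          apply mul_neg_of_pos_of_neg <;> linarith
      · rw [if_pos h]
        constructor
        · intro hf
          rcases mul_neg_iff.1 hf with ⟨h1, h2⟩ | ⟨h1, h2⟩
          · linarith
          · linarith
        · intro hlt
          apply mul_neg_of_neg_of_pos <;> linarith
    have hfarset : Even ((V.filter (fun w =>
        if 0 < det2 u o - c then det2 u w < c else c < det2 u w)).card) :=
      side_even hvert hu hline (fun d => if 0 < det2 u o - c then d < c else c < d)
    have hnearset : Even ((V.filter (fun w =>
        if 0 < det2 u o - c then c < det2 u w else det2 u w < c)).card) :=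
      side_even hvert hu hline (fun d => if 0 < det2 u o - c then c < d else d < c)
    set M := V.filter (fun w => θ a < θ w ∧ θ w < θ b) with hMdef
    have hMeven : Even M.card := by
      rcases lt_or_ge (θ b - θ a) Real.pi with hcase | hcase
      · have hMf : M = V.filter (fun w =>
            if 0 < det2 u o - c then det2 u w < c else c < det2 u w) := by
          apply Finset.filter_congr
          intro w hw
          rcases eq_or_ne w a with rfl | hwa
          · constructor
            · rintro ⟨h1, -⟩; exact absurd h1 (lt_irrefl _)
            · intro h; exfalso; split_ifs at h <;> linarith [hc]
          · rcases eq_or_ne w b with rfl | hwb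
            · constructor
              · rintro ⟨-, h2⟩; exact absurd h2 (lt_irrefl _)
              · intro h; exfalso; split_ifs at h <;> linarith [hbc]
            · have h1 := hchar w hw hwa hwb
              rw [if_pos hcase] at h1
              rw [← h1, hfar_iff w hw hwa hwb]
        rw [hMf]
        exact hfarset
      · have hMf : M = V.filter (fun w =>
            if 0 < det2 u o - c then c < det2 u w else det2 u w < c) := by
          apply Finset.filter_congr
          intro w hw
          rcases eq_or_ne w a with rfl | hwa
          · constructor
            · rintro ⟨h1, -⟩; exact absurd h1 (lt_irrefl _)
            · intro h; exfalso; split_ifs at h <;> linarith [hc]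
          · rcases eq_or_ne w b with rfl | hwb
            · constructor
              · rintro ⟨-, h2⟩; exact absurd h2 (lt_irrefl _)
              · intro h; exfalso; split_ifs at h <;> linarith [hbc]
            · have hch := hchar w hw hwa hwb
              rw [if_neg (by linarith)] at hch
              have hf := hfar_iff w hw hwa hwb
              have hd := hwnot w hw hwa hwb
              have hnp : (if 0 < det2 u o - c then c < det2 u w else det2 u w < c)
                  ↔ ¬ (if 0 < det2 u o - c then det2 u w < c else c < det2 u w) := by
                split_ifs
                · constructor
                  · intro h1 h2; linarith
                  · intro h1; exact lt_of_le_of_ne (not_lt.1 h1) (Ne.symm hd)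
                · constructor
                  · intro h1 h2; linarith
                  · intro h1; exact lt_of_le_of_ne (not_lt.1 h1) hd
              rw [hnp]
              constructor
              · intro hint hfp
                exact (hch.1 (hf.2 hfp)) hint
              · intro hnfp
                by_contra hni
                exact hnfp (hf.1 (hch.2 hni))
        rw [hMf]
        exact hnearset
    have hsplit : V.filter (fun w => θ w < θ b)
        = (V.filter (fun w => θ w < θ a)) ∪ insert a M := by
      ext w
      simp only [Finset.mem_union, Finset.mem_insert, Finset.mem_filter, hMdef]
      constructor
      · rintro ⟨hw, hwb⟩
        rcases lt_trichotomy (θ w) (θ a) with h | h | h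
        · exact Or.inl ⟨hw, h⟩
        · exact Or.inr (Or.inl (hθinj w hw a ha h))
        · exact Or.inr (Or.inr ⟨hw, h, hwb⟩)
      · rintro (⟨hw, h⟩ | rfl | ⟨hw, h1, h2⟩)
        · exact ⟨hw, lt_trans h hθab⟩
        · exact ⟨ha, hθab⟩
        · exact ⟨hw, h2⟩
    have hdisj : Disjoint (V.filter (fun w => θ w < θ a)) (insert a M) := by
      rw [Finset.disjoint_left]
      intro w hw hw2
      have h1 := (Finset.mem_filter.1 hw).2
      rcases Finset.mem_insert.1 hw2 with rfl | hw3
      · exact absurd h1 (lt_irrefl _)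
      · have h2 := (Finset.mem_filter.1 hw3).2.1
        linarith
    have haM : a ∉ M := by
      intro h
      exact absurd ((Finset.mem_filter.1 h).2.1) (lt_irrefl _)
    have hcard : (V.filter (fun w => θ w < θ b)).card
        = (V.filter (fun w => θ w < θ a)).card + (M.card + 1) := by
      rw [hsplit, Finset.card_union_of_disjoint hdisj, Finset.card_insert_of_notMem haM]
    intro hcon
    obtain ⟨m, hm⟩ := hMeven
    rw [hcard, hm] at hcon
    have hmm : ¬ Even (m + m + 1) := by
      simp [Nat.even_add_one, Nat.even_add]
    have h2 : Even ((V.filter (fun w => θ w < θ a)).card + (m + m + 1))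
        ↔ ¬ Even ((V.filter (fun w => θ w < θ a)).card) := by
      rw [Nat.even_add]
      tauto
    rw [h2] at hcon
    exact iff_not_self hcon
  rcases lt_trichotomy (Complex.arg (x - o)) (Complex.arg (y - o)) with h | h | h
  · exact aux x hx y hy hxy hfxy h
  · exact absurd (hθinj x hx y hy h) hxy
  · intro hcon
    exact aux y hy x hx (Ne.symm hxy) hfxy.symm h hcon.symm

/-- Let `Λ ⊆ ℂ` be a cyclotomic Delone set and `U ⊆ S¹` a set of two or more
pairwise nonparallel `Λ`-directions. If there exists a `U`-polygon in `Λ`, then there exist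
two distinct convex subsets of `Λ` having the same X-rays in all directions of `U`. -/
theorem stmt3 (Λ : Set ℂ) (hΛ : ∃ n : ℕ, 3 ≤ n ∧ IsCycDelone n Λ)
    (U : Finset ℂ) (hcard : 2 ≤ U.card)
    (hdir : ∀ u ∈ U, IsDir Λ u) (hpar : PwNonPar (U : Set ℂ))
    (hpoly : ∃ V : Finset ℂ, IsUPolygonIn (U : Set ℂ) Λ V) :
    ∃ C₁ C₂ : Set ℂ, IsConvexSubset Λ C₁ ∧ IsConvexSubset Λ C₂ ∧ C₁ ≠ C₂ ∧
      ∀ u ∈ U, SameXRay C₁ C₂ u := by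
  classical
  obtain ⟨n, -, ⟨⟨⟨r, hr, hsep⟩, -⟩, -, -⟩⟩ := hΛ
  obtain ⟨V, ⟨⟨hV3, hncol, hvert, hlines⟩, hVΛ⟩⟩ := hpoly
  have hu0 : ∀ u ∈ U, (u:ℂ) ≠ 0 := by
    intro u hu h
    have h1 := (hdir u hu).1
    rw [h] at h1; simp at h1
  obtain ⟨o, hoK, hgood⟩ := exists_good_center hV3 hncol
  have hline : ∀ u ∈ U, ∀ v ∈ V, ∃ v' ∈ V, v' ≠ v ∧ v' ∈ lineDir u v := by
    intro u hu v hv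
    exact hlines v hv u (by exact_mod_cast hu)
  set χ : ℂ → Prop := fun w =>
    Even ((V.filter (fun w' => Complex.arg (w' - o) < Complex.arg (w - o))).card) with hχ
  set A : Finset ℂ := V.filter χ with hA
  set B : Finset ℂ := V.filter (fun w => ¬ χ w) with hB
  have hkey : ∀ u ∈ U, ∀ a ∈ V, ∀ b ∈ V, a ≠ b → det2 u a = det2 u b → (χ a ↔ ¬ χ b) := by
    intro u hu a ha b hb hab hf
    have h1 := rank_parity hV3 hvert hoK hgood (hu0 u hu) (hline u hu) ha hb hab hf
    rw [hχ]
    tauto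
  set K := convexHull ℝ (V : Set ℂ) with hK
  have hKb : Bornology.IsBounded K :=
    (Set.Finite.isCompact_convexHull ℝ V.finite_toSet).isBounded
  set C : Set ℂ := K ∩ Λ with hC
  have hVC : (V : Set ℂ) ⊆ C := fun v hv => ⟨subset_convexHull ℝ _ hv, hVΛ hv⟩
  have hCb : Bornology.IsBounded C := hKb.subset Set.inter_subset_left
  have hCfin : C.Finite := bounded_finite hr hsep Set.inter_subset_right hCb
  have hext : ∀ a ∈ V, ∀ p ∈ K, ∀ q ∈ K, p ≠ a → a ∈ openSegment ℝ p q → False := by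
    intro a ha p hp q hq hpa hseg
    exact vertex_extreme hV3 ha (hvert a ha) hp hq hpa hseg
  have hconvsub : ∀ (E : Finset ℂ), (∀ e ∈ E, e ∈ V) → IsConvexSubset Λ (C \ ↑E) := by
    intro E hEV
    refine ⟨fun z hz => hz.1.2, hCb.subset Set.diff_subset, ?_⟩
    apply Set.Subset.antisymm
    · intro z hz
      exact ⟨subset_convexHull ℝ _ hz, hz.1.2⟩
    · intro z hz
      have hKE : Convex ℝ (K \ ↑E) :=
        convex_diff_extreme (convex_convexHull ℝ _) E
          (fun e he p hp q hq hpq hseg => hext e (hEV e he) p hp q hq hpq hseg)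
      have hsub : C \ ↑E ⊆ K \ ↑E := fun w hw => ⟨hw.1.1, hw.2⟩
      have h1 : convexHull ℝ (C \ ↑E) ⊆ K \ ↑E := convexHull_min hsub hKE
      have h2 := h1 hz.1
      exact ⟨⟨h2.1, hz.2⟩, h2.2⟩
  have hCA : IsConvexSubset Λ (C \ ↑A) := hconvsub A (fun e he => (Finset.mem_filter.1 he).1)
  have hCB : IsConvexSubset Λ (C \ ↑B) := hconvsub B (fun e he => (Finset.mem_filter.1 he).1)
  obtain ⟨u₀, hu₀⟩ := Finset.card_pos.1 (show 0 < U.card by omega)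
  obtain ⟨v₀, hv₀⟩ := Finset.card_pos.1 (show 0 < V.card by omega)
  obtain ⟨v₁, hv₁, hv₁0, hv₁l⟩ := hline u₀ hu₀ v₀ hv₀
  have hv₁f : det2 u₀ v₁ = det2 u₀ v₀ := (mem_lineDir (hu0 u₀ hu₀) _ _).1 hv₁l
  have hopp := hkey u₀ hu₀ v₁ hv₁ v₀ hv₀ hv₁0 hv₁f
  have hAne : ∃ a₀, a₀ ∈ A := by
    by_cases h : χ v₀
    · exact ⟨v₀, Finset.mem_filter.2 ⟨hv₀, h⟩⟩
    · exact ⟨v₁, Finset.mem_filter.2 ⟨hv₁, hopp.2 h⟩⟩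
  obtain ⟨a₀, ha₀⟩ := hAne
  have ha₀V : a₀ ∈ V := (Finset.mem_filter.1 ha₀).1
  have ha₀χ : χ a₀ := (Finset.mem_filter.1 ha₀).2
  have ha₀B : a₀ ∉ B := fun h => (Finset.mem_filter.1 h).2 ha₀χ
  refine ⟨C \ ↑A, C \ ↑B, hCA, hCB, ?_, ?_⟩
  · intro heq
    have h1 : a₀ ∈ C \ ↑B := ⟨hVC ha₀V, fun hc => ha₀B (Finset.mem_coe.1 hc)⟩
    rw [← heq] at h1
    exact h1.2 (Finset.mem_coe.2 ha₀)
  · intro u hu z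
    have hu0' := hu0 u hu
    have hlmem : ∀ w : ℂ, w ∈ lineDir u z ↔ det2 u w = det2 u z :=
      fun w => mem_lineDir hu0' z w
    have hABline : (A.filter (fun w => det2 u w = det2 u z)).card
        = (B.filter (fun w => det2 u w = det2 u z)).card := by
      have hAf : A.filter (fun w => det2 u w = det2 u z)
          = (V.filter (fun w => det2 u w = det2 u z)).filter χ := by
        ext w
        simp only [hA, Finset.mem_filter]
        tauto
      have hBf : B.filter (fun w => det2 u w = det2 u z)
          = (V.filter (fun w => det2 u w = det2 u z)).filter (fun w => ¬ χ w) := by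
        ext w
        simp only [hB, Finset.mem_filter]
        tauto
      rw [hAf, hBf]
      rcases (V.filter (fun w => det2 u w = det2 u z)).eq_empty_or_nonempty with hPe | hPn
      · rw [hPe]; simp
      · obtain ⟨w₀, hw₀⟩ := hPn
        have hw₀' := Finset.mem_filter.1 hw₀
        have hPcard : (V.filter (fun w => det2 u w = det2 u z)).card = 2 := by
          have h2 := fiber_card hvert hu0' hw₀'.1 (hline u hu w₀ hw₀'.1)
          have hPP : V.filter (fun w => det2 u w = det2 u z)
              = V.filter (fun w => det2 u w = det2 u w₀) := by
            apply Finset.filter_congr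
            intro w hw
            rw [hw₀'.2]
          rw [hPP]
          exact h2
        obtain ⟨p₁, p₂, hp12, hPeq⟩ := Finset.card_eq_two.1 hPcard
        have hp₁ : p₁ ∈ V.filter (fun w => det2 u w = det2 u z) := by rw [hPeq]; simp
        have hp₂ : p₂ ∈ V.filter (fun w => det2 u w = det2 u z) := by rw [hPeq]; simp
        have h1 := Finset.mem_filter.1 hp₁
        have h2 := Finset.mem_filter.1 hp₂
        have hoppp := hkey u hu p₁ h1.1 p₂ h2.1 hp12 (h1.2.trans h2.2.symm)
        rw [hPeq]
        by_cases hcp : χ p₁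
        · have hcp2 : ¬ χ p₂ := hoppp.1 hcp
          rw [Finset.filter_insert, Finset.filter_singleton,
            Finset.filter_insert, Finset.filter_singleton]
          simp [hcp, hcp2]
        · have hcp2 : χ p₂ := by
            by_contra hc2
            exact hcp (hoppp.2 hc2)
          rw [Finset.filter_insert, Finset.filter_singleton,
            Finset.filter_insert, Finset.filter_singleton]
          simp [hcp, hcp2]
    have hCl : ∀ (E : Finset ℂ), (↑E ⊆ C) → ((C \ ↑E) ∩ lineDir u z).ncard
        = (C ∩ lineDir u z).ncard - (E.filter (fun w => det2 u w = det2 u z)).card := by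
      intro E hEC
      have he1 : (C \ ↑E) ∩ lineDir u z
          = (C ∩ lineDir u z) \ ↑(E.filter (fun w => det2 u w = det2 u z)) := by
        ext w
        simp only [Set.mem_inter_iff, Set.mem_diff, Finset.coe_filter,
          Set.mem_setOf_eq, Finset.mem_coe]
        constructor
        · rintro ⟨⟨hwC, hwE⟩, hwl⟩
          exact ⟨⟨hwC, hwl⟩, fun hca => hwE hca.1⟩
        · rintro ⟨⟨hwC, hwl⟩, hne⟩
          exact ⟨⟨hwC, fun hwE => hne ⟨hwE, (hlmem w).1 hwl⟩⟩, hwl⟩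
      have hsub2 : ↑(E.filter (fun w => det2 u w = det2 u z)) ⊆ C ∩ lineDir u z := by
        intro w hw
        simp only [Finset.coe_filter, Set.mem_setOf_eq] at hw
        exact ⟨hEC (Finset.mem_coe.2 hw.1), (hlmem w).2 hw.2⟩
      rw [he1, Set.ncard_diff hsub2 (Finset.finite_toSet _), Set.ncard_coe_finset]
    have hAsubC : (↑A : Set ℂ) ⊆ C := fun w hw =>
      hVC (Finset.mem_coe.2 ((Finset.mem_filter.1 (Finset.mem_coe.1 hw)).1))
    have hBsubC : (↑B : Set ℂ) ⊆ C := fun w hw =>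
      hVC (Finset.mem_coe.2 ((Finset.mem_filter.1 (Finset.mem_coe.1 hw)).1))
    rw [Nat.card_coe_set_eq, Nat.card_coe_set_eq, hCl A hAsubC, hCl B hBsubC, hABline]
end
end

section
/- Let Λ ⊆ ℂ be a cyclotomic Delone set. Then no finite set U ⊆ S¹ of pairwise nonparallel Λ-directions determines the whole class of finite subsets of Λ by the corresponding X-rays; i.e., for every finite set U of pairwise nonparallel Λ-directions there exist two distinct finite subsets of Λ having the same X-rays in all directions of U. -/
open Complex Set

noncomputable section

private lemma lineDir_shift (u z : ℂ) (r : ℝ) : lineDir u (z - (r : ℂ) * u) = lineDir u z := by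
  ext w
  constructor
  · rintro ⟨t, rfl⟩; exact ⟨t - r, by push_cast; ring⟩
  · rintro ⟨t, rfl⟩; exact ⟨t + r, by push_cast; ring⟩

private lemma preimage_add_lineDir (u z v : ℂ) :
    (fun w => w + v) ⁻¹' lineDir u z = lineDir u (z - v) := by
  ext w
  simp only [Set.mem_preimage, lineDir, Set.mem_setOf_eq]
  constructor
  · rintro ⟨t, ht⟩; exact ⟨t, by linear_combination ht⟩
  · rintro ⟨t, ht⟩; exact ⟨t, by linear_combination ht⟩

private lemma ncard_image_inter {f : ℂ → ℂ} (hf : Function.Injective f) (A L : Set ℂ) :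
    (f '' A ∩ L).ncard = (A ∩ f ⁻¹' L).ncard := by
  rw [← Set.image_inter_preimage, Set.ncard_image_of_injective _ hf]

private lemma preimage_aff_lineDir (u z t : ℂ) (l : ℝ) (hl : l ≠ 0) :
    (fun w => (l : ℂ) * w + t) ⁻¹' lineDir u z = lineDir u ((z - t) / (l : ℂ)) := by
  have hl' : (l : ℂ) ≠ 0 := by exact_mod_cast hl
  ext w
  simp only [Set.mem_preimage, lineDir, Set.mem_setOf_eq]
  constructor
  · rintro ⟨s, hs⟩
    refine ⟨s / l, ?_⟩
    push_cast
    field_simp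
    linear_combination hs
  · rintro ⟨s, hs⟩
    refine ⟨s * l, ?_⟩
    push_cast
    rw [hs]
    field_simp
    ring

private lemma key_construction (Λ : Set ℂ) (U : Finset ℂ) :
    (∀ u ∈ U, IsDir Λ u) →
    ∃ F₁ F₂ : Finset ℂ, (F₁ : Set ℂ) ⊆ (KField Λ : Set ℂ) ∧
      (F₂ : Set ℂ) ⊆ (KField Λ : Set ℂ) ∧ Disjoint F₁ F₂ ∧ F₁.Nonempty ∧
      ∀ u ∈ U, SameXRay (F₁ : Set ℂ) (F₂ : Set ℂ) u := by
  classical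
  induction U using Finset.induction_on with
  | empty =>
    intro _
    refine ⟨{0}, ∅, ?_, by simp, by simp, ⟨0, by simp⟩, by simp⟩
    intro x hx
    simp only [Finset.coe_singleton, Set.mem_singleton_iff] at hx
    subst hx
    exact zero_mem (KField Λ)
  | @insert u₀ U hu₀U ih =>
    intro hdir
    obtain ⟨F₁, F₂, hK₁, hK₂, hdisj, hne, hX⟩ :=
      ih (fun u hu => hdir u (Finset.mem_insert_of_mem hu))
    obtain ⟨-, w₀, hwΛ, hw0, s, hs⟩ := hdir u₀ (Finset.mem_insert_self u₀ U)
    have hw₀K : w₀ ∈ KField Λ :=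
      Subfield.subset_closure (Set.mem_union_left _ hwΛ)
    obtain ⟨R, hR⟩ := Finset.exists_le ((F₁ ∪ F₂).image (fun x => ‖x‖))
    set R' : ℝ := max R 0 with hR'def
    have hRbound : ∀ x ∈ F₁ ∪ F₂, ‖x‖ ≤ R' := by
      intro x hx
      exact le_trans (hR _ (Finset.mem_image_of_mem _ hx)) (le_max_left _ _)
    have hw0norm : 0 < ‖w₀‖ := norm_pos_iff.mpr hw0
    obtain ⟨n, hn⟩ := exists_nat_gt (2 * R' / ‖w₀‖)
    set v : ℂ := (n : ℂ) * w₀ with hvdef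
    have hvK : v ∈ KField Λ := mul_mem (natCast_mem _ n) hw₀K
    have hvnorm : 2 * R' < ‖v‖ := by
      have : 2 * R' / ‖w₀‖ * ‖w₀‖ < (n : ℝ) * ‖w₀‖ :=
        mul_lt_mul_of_pos_right hn hw0norm
      rw [div_mul_cancel₀ _ (ne_of_gt hw0norm)] at this
      simpa [hvdef, norm_mul] using this
    have hvpar : v = ((n * s : ℝ) : ℂ) * u₀ := by rw [hvdef, hs]; push_cast; ring
    have hfar : ∀ x ∈ F₁ ∪ F₂, ∀ y ∈ F₁ ∪ F₂, x ≠ y + v := by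
      intro x hx y hy hxy
      have h1 : ‖v‖ = ‖x - y‖ := by rw [hxy]; ring_nf
      have h2 : ‖x - y‖ ≤ ‖x‖ + ‖y‖ := norm_sub_le _ _
      have h3 : ‖x‖ + ‖y‖ ≤ 2 * R' := by
        have := hRbound x hx; have := hRbound y hy; linarith
      linarith [hvnorm]
    set F₂v : Finset ℂ := F₂.image (· + v) with hF₂v
    set F₁v : Finset ℂ := F₁.image (· + v) with hF₁v
    have hinj : Function.Injective (· + v) := add_left_injective v
    refine ⟨F₁ ∪ F₂v, F₂ ∪ F₁v, ?_, ?_, ?_, ?_, ?_⟩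
    · intro x hx
      simp only [Finset.coe_union, Set.mem_union, hF₂v, Finset.coe_image,
        Set.mem_image] at hx
      rcases hx with hx | ⟨y, hy, rfl⟩
      · exact hK₁ hx
      · exact add_mem (hK₂ hy) hvK
    · intro x hx
      simp only [Finset.coe_union, Set.mem_union, hF₁v, Finset.coe_image,
        Set.mem_image] at hx
      rcases hx with hx | ⟨y, hy, rfl⟩
      · exact hK₂ hx
      · exact add_mem (hK₁ hy) hvK
    · rw [Finset.disjoint_left]
      intro x hx hx'
      simp only [Finset.mem_union, hF₂v, hF₁v, Finset.mem_image] at hx hx'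
      rcases hx with hx | ⟨y, hy, rfl⟩
      · rcases hx' with hx' | ⟨y, hy, rfl⟩
        · exact Finset.disjoint_left.mp hdisj hx hx'
        · exact hfar _ (Finset.mem_union_left _ hx) _ (Finset.mem_union_left _ hy) rfl
      · rcases hx' with hx' | ⟨y', hy', hyy⟩
        · exact hfar _ (Finset.mem_union_right _ hx') _ (Finset.mem_union_right _ hy) rfl
        · have : y' = y := hinj hyy
          subst this
          exact Finset.disjoint_left.mp hdisj hy' hy
    · exact hne.mono Finset.subset_union_left
    · intro u hu z
      have hcoe1 : ((F₁ ∪ F₂v : Finset ℂ) : Set ℂ) = (F₁ : Set ℂ) ∪ (· + v) '' (F₂ : Set ℂ) := by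
        simp [hF₂v]
      have hcoe2 : ((F₂ ∪ F₁v : Finset ℂ) : Set ℂ) = (F₂ : Set ℂ) ∪ (· + v) '' (F₁ : Set ℂ) := by
        simp [hF₁v]
      have hdisjS : ∀ (A B : Finset ℂ), Disjoint A B →
          ∀ L : Set ℂ, ((A : Set ℂ) ∪ (· + v) '' (B : Set ℂ)) ∩ L =
            ((A : Set ℂ) ∩ L) ∪ ((· + v) '' (B : Set ℂ) ∩ L) := by
        intro A B _ L
        exact Set.union_inter_distrib_right _ _ _
      have hDAB : ∀ (A B : Finset ℂ), A ⊆ F₁ ∪ F₂ → B ⊆ F₁ ∪ F₂ →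
          Disjoint ((A : Set ℂ)) ((· + v) '' (B : Set ℂ)) := by
        intro A B hA hB
        rw [Set.disjoint_left]
        rintro x hx ⟨y, hy, rfl⟩
        exact hfar _ (hA hx) _ (hB hy) rfl
      have hcount : ∀ (A B : Finset ℂ), A ⊆ F₁ ∪ F₂ → B ⊆ F₁ ∪ F₂ → ∀ z' : ℂ,
          Nat.card ↥((((A ∪ B.image (· + v)) : Finset ℂ) : Set ℂ) ∩ lineDir u z') =
            ((A : Set ℂ) ∩ lineDir u z').ncard +
              ((B : Set ℂ) ∩ lineDir u (z' - v)).ncard := by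
        intro A B hA hB z'
        rw [Nat.card_coe_set_eq]
        have : (((A ∪ B.image (· + v)) : Finset ℂ) : Set ℂ) =
            (A : Set ℂ) ∪ (· + v) '' (B : Set ℂ) := by simp
        rw [this, Set.union_inter_distrib_right,
          Set.ncard_union_eq
            (Set.disjoint_of_subset Set.inter_subset_left Set.inter_subset_left
              (hDAB A B hA hB))
            (A.finite_toSet.inter_of_left _)
            ((B.finite_toSet.image _).inter_of_left _),
          ncard_image_inter hinj, preimage_add_lineDir]
      have hc1 := hcount F₁ F₂ Finset.subset_union_left Finset.subset_union_right z
      have hc2 := hcount F₂ F₁ Finset.subset_union_right Finset.subset_union_left z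
      rw [hc1, hc2]
      rcases Finset.mem_insert.mp hu with rfl | hu'
      · -- u = u₀ : the translation v is parallel to u
        have hline : lineDir u (z - v) = lineDir u z := by
          rw [hvpar]; exact lineDir_shift u z (n * s)
        rw [hline]
        ring
      · -- u ∈ U : use the induction hypothesis twice
        have h1 := hX u hu' z
        have h2 := hX u hu' (z - v)
        rw [Nat.card_coe_set_eq, Nat.card_coe_set_eq] at h1 h2
        rw [h1, h2]

/-- Let `Λ` be a cyclotomic Delone set. Then for every finite set `U ⊆ S¹`
of pairwise nonparallel `Λ`-directions there exist two distinct finite subsets of `Λ`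
having the same X-rays in all directions of `U`. -/
theorem stmt19 (Λ : Set ℂ) (hΛ : ∃ n : ℕ, 3 ≤ n ∧ IsCycDelone n Λ)
    (U : Finset ℂ) (hdir : ∀ u ∈ U, IsDir Λ u) (hpar : PwNonPar (U : Set ℂ)) :
    ∃ F₁ F₂ : Finset ℂ, (F₁ : Set ℂ) ⊆ Λ ∧ (F₂ : Set ℂ) ⊆ Λ ∧ F₁ ≠ F₂ ∧
      ∀ u ∈ U, SameXRay (F₁ : Set ℂ) (F₂ : Set ℂ) u := by
  classical
  obtain ⟨n, -, -, -, hhom⟩ := hΛ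
  obtain ⟨F₁, F₂, hK₁, hK₂, hdisj, hne, hX⟩ := key_construction Λ U hdir
  obtain ⟨l, t, hl, hlt⟩ := hhom (F₁ ∪ F₂) (by
    intro x hx
    simp only [Finset.coe_union, Set.mem_union] at hx
    rcases hx with hx | hx
    · exact hK₁ hx
    · exact hK₂ hx)
  set φ : ℂ → ℂ := fun w => (l : ℂ) * w + t with hφ
  have hl0 : (l : ℂ) ≠ 0 := by exact_mod_cast ne_of_gt hl
  have hφinj : Function.Injective φ := by
    intro a b hab
    have : (l : ℂ) * a = (l : ℂ) * b := by
      simpa [hφ] using congrArg (· - t) hab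
    exact mul_left_cancel₀ hl0 this
  refine ⟨F₁.image φ, F₂.image φ, ?_, ?_, ?_, ?_⟩
  · intro x hx
    simp only [Finset.coe_image, Set.mem_image] at hx
    obtain ⟨y, hy, rfl⟩ := hx
    exact hlt y (Finset.mem_union_left _ (by exact_mod_cast hy))
  · intro x hx
    simp only [Finset.coe_image, Set.mem_image] at hx
    obtain ⟨y, hy, rfl⟩ := hx
    exact hlt y (Finset.mem_union_right _ (by exact_mod_cast hy))
  · intro h
    have hd : Disjoint (F₁.image φ) (F₂.image φ) := (Finset.disjoint_image hφinj).mpr hdisj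
    obtain ⟨x, hx⟩ := hne
    have h1 : φ x ∈ F₁.image φ := Finset.mem_image_of_mem φ hx
    have h2 : φ x ∈ F₂.image φ := h ▸ h1
    exact Finset.disjoint_left.mp hd h1 h2
  · intro u hu z
    rw [Finset.coe_image, Finset.coe_image, Nat.card_coe_set_eq, Nat.card_coe_set_eq,
      ncard_image_inter hφinj, ncard_image_inter hφinj, hφ,
      preimage_aff_lineDir u z t l (ne_of_gt hl)]
    have := hX u hu ((z - t) / (l : ℂ))
    rw [Nat.card_coe_set_eq, Nat.card_coe_set_eq] at this
    exact this
end
end
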